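/- arXiv:2504.01889 — 3 statements merged into one kernel-verified Lean document; each statement's English description precedes it below -/
import Mathlib

section
/- Let n1, n2, n3, n4 be integers satisfying -2*n1 + n4 ≥ 0, n1 + n3 ≥ 0, n4 ≥ 0, n3 ≥ 0, n2 + 2*n3 + n4 ≥ 0, and -n1 + n2 + 2*n3 + 2*n4 = 1. Then there exists an integer m ≥ 0 such that (n1, n2, n3, n4) equals one of: (0, 1-2*m, m, 0), (0, -1-2*m, m, 1), (1, -2-2*m, m, 2), or (-1, -2-2*m, m+1, 0). -/
theorem stmt_4 (n1 n2 n3 n4 : ℤ)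
    (h1 : -2*n1 + n4 ≥ 0) (h2 : n1 + n3 ≥ 0) (h3 : n4 ≥ 0) (h4 : n3 ≥ 0)
    (h5 : n2 + 2*n3 + n4 ≥ 0) (h6 : -n1 + n2 + 2*n3 + 2*n4 = 1) :
    ∃ m : ℤ, m ≥ 0 ∧
      ((n1 = 0 ∧ n2 = 1 - 2*m ∧ n3 = m ∧ n4 = 0) ∨
       (n1 = 0 ∧ n2 = -1 - 2*m ∧ n3 = m ∧ n4 = 1) ∨
       (n1 = 1 ∧ n2 = -2 - 2*m ∧ n3 = m ∧ n4 = 2) ∨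
       (n1 = -1 ∧ n2 = -2 - 2*m ∧ n3 = m + 1 ∧ n4 = 0)) := by
  rcases (show n1 = -1 ∨ n1 = 0 ∨ n1 = 1 by omega) with h | h | h
  · exact ⟨n3 - 1, by omega, by omega⟩
  · exact ⟨n3, by omega, by omega⟩
  · exact ⟨n3, by omega, by omega⟩
end

section
/- Let K be a field and a, b, c, x, y ∈ K with x ≠ 0, y ≠ 0, and y^2 ≠ a. Set W(x,y) = y + a/y + b*y*(y^2 + a)/(y^2 - a)^2 + (c/(x*y^2) + c*x/y^2)*(1 - a/y^2)^{-2}. Then y + a/y + b*y*(y^2 + a)/(y^2 - a)^2 + c/(x*y^2) + (c*x/y^2)*(1 - a/y^2)^{-4} = W(x*(1 - a/y^2)^{-2}, y). -/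
/- Substituting `x ↦ x u⁻¹` with `u = (1 - a/y²)²` absorbs the factor `u⁻¹` into the
`c/(x y²)` term and doubles it on the `c x/y²` term, giving `u⁻² = (1 - a/y²)⁻⁴`. -/

/-- The F₄ superpotential `W(x,y)` from equation (3.1) of the paper, with
    `a = T^A`, `b = T^B`, `c = T^{A/2+B}` abstract field elements. -/
def Wpot {K : Type*} [Field K] (a b c x y : K) : K :=
  y + a/y + b*y*(y^2 + a)/(y^2 - a)^2 + (c/(x*y^2) + c*x/y^2) * ((1 - a/y^2)^2)⁻¹

lemma one_sub_div_sq_ne_zero {K : Type*} [Field K] {a y : K} (hya : y ^ 2 ≠ a) :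
    1 - a / y ^ 2 ≠ 0 := by
  by_cases hy : y = 0
  · simp [hy]
  · rw [sub_ne_zero, ne_comm, Ne, div_eq_one_iff_eq (pow_ne_zero 2 hy)]
    exact hya.symm

lemma div_mul_inv_mul_inv_cancel {K : Type*} [Field K] (c x e : K) {u : K} (hu : u ≠ 0) :
    c / (x * u⁻¹ * e) * u⁻¹ = c / (x * e) := by
  simp only [div_eq_mul_inv, mul_inv, inv_inv]
  field_simp

theorem stmt_9_general {K : Type*} [Field K] (a b c x y : K)
    (hya : y^2 ≠ a) :
    y + a/y + b*y*(y^2 + a)/(y^2 - a)^2 + c/(x*y^2)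
      + (c*x/y^2) * ((1 - a/y^2)^4)⁻¹
    = Wpot a b c (x * ((1 - a/y^2)^2)⁻¹) y := by
  have hu : (1 - a / y ^ 2) ^ 2 ≠ 0 := pow_ne_zero 2 (one_sub_div_sq_ne_zero hya)
  rw [Wpot, add_mul, div_mul_inv_mul_inv_cancel c x (y ^ 2) hu]
  generalize 1 - a / y ^ 2 = d
  ring

theorem stmt_9 {K : Type*} [Field K] (a b c x y : K)
    (hx : x ≠ 0) (hy : y ≠ 0) (hya : y^2 ≠ a) :
    y + a/y + b*y*(y^2 + a)/(y^2 - a)^2 + c/(x*y^2)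
      + (c*x/y^2) * ((1 - a/y^2)^4)⁻¹
    = Wpot a b c (x * ((1 - a/y^2)^2)⁻¹) y :=
  stmt_9_general a b c x y hya
end

section
/- Let K be a field, and let x, y, s, p, q ∈ K with x ≠ 0, y ≠ 0, and u := 1 + s*x/y ≠ 0. Define x' = x/u and y' = y/u. Then y' + p/y' + q/y' + s*x' + s*p/(x'*y'^2) = y + (p + q)*(1/y + s*x/y^2) + (s*p/(x*y^2))*(1 + s*x/y)^3. -/
/-!
Writing `u = 1 + s x / y`, the substitution is the rescaling `(x, y) ↦ (x / u, y / u)`, and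
`y + s x = y u`. Hence `y' + s x' = y`, `1 / y' = u / y = 1 / y + s x / y²`, and the monomial
`1 / (x' y'²)` picks up the factor `u³`.
-/

section WallCrossing

variable {K : Type*} [Field K]

theorem div_add_mul_div_one_add_mul_div {x y s : K} (hy : y ≠ 0) (hu : 1 + s * x / y ≠ 0) :
    y / (1 + s * x / y) + s * (x / (1 + s * x / y)) = y := by
  rw [mul_div_assoc', ← add_div, div_eq_iff hu]
  field_simp

theorem one_div_div_one_add_mul_div (x y s : K) :
    1 / (y / (1 + s * x / y)) = 1 / y + s * x / y ^ 2 := by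
  rw [one_div_div]
  ring

theorem div_div_mul_div_pow (a x y u : K) :
    a / (x / u * (y / u) ^ 2) = a / (x * y ^ 2) * u ^ 3 := by
  rw [show x / u * (y / u) ^ 2 = x * y ^ 2 / u ^ 3 by ring, div_div_eq_mul_div,
    mul_div_right_comm]

end WallCrossing

theorem stmt_12_general {K : Type*} [Field K] (x y s p q : K)
    (hy : y ≠ 0) (hu : 1 + s*x/y ≠ 0) :
    let u := 1 + s*x/y
    let x' := x/u
    let y' := y/u
    y' + p/y' + q/y' + s*x' + s*p/(x'*y'^2)
      = y + (p + q)*(1/y + s*x/y^2) + (s*p/(x*y^2))*(1 + s*x/y)^3 := by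
  intro u x' y'
  calc y' + p/y' + q/y' + s*x' + s*p/(x'*y'^2)
      = (y' + s*x') + (p + q) * (1/y') + s*p/(x'*y'^2) := by ring
    _ = y + (p + q)*(1/y + s*x/y^2) + (s*p/(x*y^2))*(1 + s*x/y)^3 := by
      rw [div_add_mul_div_one_add_mul_div hy hu, one_div_div_one_add_mul_div,
        div_div_mul_div_pow]

theorem stmt_12 {K : Type*} [Field K] (x y s p q : K)
    (hx : x ≠ 0) (hy : y ≠ 0) (hu : 1 + s*x/y ≠ 0) :
    let u := 1 + s*x/y
    let x' := x/u
    let y' := y/u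
    y' + p/y' + q/y' + s*x' + s*p/(x'*y'^2)
      = y + (p + q)*(1/y + s*x/y^2) + (s*p/(x*y^2))*(1 + s*x/y)^3 :=
  stmt_12_general x y s p q hy hu
end
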